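/- For t > 0, the contour integral ∫_γ k e^{-2ik⁴t} dk equals c₁/√t, where c₁ = √π e^{-iπ/4}/(2√2); for t < 0 the same integral equals 0. -/

import Mathlib

open Filter MeasureTheory

/-- Truncated contour integral along `γ_R = [R e^{iπ/4}, 0] ∪ [0, R]`. -/
noncomputable def gammaTrunc (f : ℂ → ℂ) (R : ℝ) : ℂ :=
  ∫ r in (0:ℝ)..R,
    (f (r : ℂ) - Complex.exp (Real.pi * Complex.I / 4) *
      f ((r : ℂ) * Complex.exp (Real.pi * Complex.I / 4)))

/-- The constant `c₁ = √π e^{-iπ/4}/(2√2)`. -/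
noncomputable def c1 : ℂ :=
  (Real.sqrt Real.pi : ℂ) * Complex.exp (-(Real.pi : ℂ) * Complex.I / 4) /
    (2 * (Real.sqrt 2 : ℂ))

/-!
After the substitution `u = r²` the two rays of `γ` become the Fresnel integrals
`∫₀^∞ e^{∓2itu²} du`, and the second one comes with the factor `e^{iπ/4} · e^{iπ/4} = i`.
A Fresnel integral `∫₀^∞ e^{icu²} du` with `c < 0` is evaluated by rotating the ray `[0, ∞)` by
`-π/4` onto a Gaussian: the integrand is entire, so the two rays differ by the integral over the
arc of radius `R` between them, which is `O(1/R)` by Jordan's inequality. The case `c > 0` is its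
complex conjugate. The two Fresnel values add up for `t > 0` and cancel for `t < 0`.
-/

open Set Complex
open scoped Real Topology

noncomputable section

def rayIntegral (f : ℂ → ℂ) (γ R : ℝ) : ℂ :=
  ∫ r in (0:ℝ)..R, cexp (γ * I) * f (r * cexp (γ * I))

def arcIntegral (f : ℂ → ℂ) (R α β : ℝ) : ℂ :=
  ∫ θ in α..β, I * R * cexp (θ * I) * f (R * cexp (θ * I))

section Sector

variable {f : ℂ → ℂ}

lemma hasDerivAt_rayIntegral (hf : Continuous f) (γ x : ℝ) :
    HasDerivAt (rayIntegral f γ) (cexp (γ * I) * f (x * cexp (γ * I))) x :=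
  ((by fun_prop : Continuous _).integral_hasStrictDerivAt 0 x).hasDerivAt

lemma hasDerivAt_arcIntegral (hf : Differentiable ℂ f) (α β x : ℝ) :
    HasDerivAt (fun y => arcIntegral f y α β)
      (cexp (β * I) * f (x * cexp (β * I)) - cexp (α * I) * f (x * cexp (α * I))) x := by
  have hfc := hf.continuous
  have hf'c := hf.deriv.continuous
  set F' : ℝ → ℝ → ℂ := fun x θ => I * cexp (θ * I) * f (x * cexp (θ * I)) +
    I * x * cexp (θ * I) * cexp (θ * I) * deriv f (x * cexp (θ * I)) with hF'
  have hF'c : Continuous (Function.uncurry F') := by simp only [hF']; fun_prop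
  -- `F'` is both the radial derivative of the arc integrand and the angular derivative of
  -- `e^{iθ} f(x e^{iθ})`: the Cauchy–Riemann equations in polar form.
  have hradial (x θ : ℝ) :
      HasDerivAt (fun y : ℝ => I * y * cexp (θ * I) * f (y * cexp (θ * I))) (F' x θ) x := by
    have h1 : HasDerivAt (fun y : ℝ => (y : ℂ) * cexp (θ * I)) (cexp (θ * I)) x := by
      simpa using ((hasDerivAt_id (x : ℂ)).mul_const (cexp (θ * I))).comp_ofReal
    have h2 : HasDerivAt (fun y : ℝ => f (y * cexp (θ * I)))
        (deriv f (x * cexp (θ * I)) * cexp (θ * I)) x := (hf _).hasDerivAt.comp x h1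
    have h3 : HasDerivAt (fun y : ℝ => I * y * cexp (θ * I)) (I * cexp (θ * I)) x := by
      simpa only [mul_assoc] using h1.const_mul I
    refine (h3.fun_mul h2).congr_deriv ?_
    simp only [F']
    ring
  have hangular (x θ : ℝ) :
      HasDerivAt (fun s : ℝ => cexp (s * I) * f (x * cexp (s * I))) (F' x θ) θ := by
    have he : HasDerivAt (fun s : ℝ => cexp (s * I)) (I * cexp (θ * I)) θ := by
      simpa [mul_comm] using ((hasDerivAt_id (θ : ℂ)).mul_const I).cexp.comp_ofReal
    have h2 := (hf (x * cexp (θ * I))).hasDerivAt.comp θ (he.const_mul (x : ℂ))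
    exact (he.fun_mul h2).congr_deriv (by simp only [F', Function.comp_apply]; ring)
  obtain ⟨C, hC⟩ := ((isCompact_closedBall x 1).prod
    (isCompact_uIcc (a := α) (b := β))).exists_bound_of_continuousOn hF'c.continuousOn
  have hderiv := intervalIntegral.hasDerivAt_integral_of_dominated_loc_of_deriv_le
    (μ := volume) (a := α) (b := β) (F' := F') (bound := fun _ => C)
    (Metric.closedBall_mem_nhds x one_pos)
    (Eventually.of_forall fun y => (by fun_prop : Continuous _).aestronglyMeasurable)
    ((by fun_prop : Continuous _).intervalIntegrable _ _)
    (hF'c.comp (Continuous.prodMk_right x)).aestronglyMeasurable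
    (ae_of_all _ fun θ hθ y hy => hC (y, θ) ⟨hy, uIoc_subset_uIcc hθ⟩)
    intervalIntegrable_const (ae_of_all _ fun θ _ y _ => hradial y θ)
  rw [← intervalIntegral.integral_eq_sub_of_hasDerivAt (fun θ _ => hangular x θ)
    ((hF'c.comp (Continuous.prodMk_right x)).intervalIntegrable _ _)]
  exact hderiv.2

theorem rayIntegral_sub_rayIntegral (hf : Differentiable ℂ f) (α β R : ℝ) :
    rayIntegral f β R - rayIntegral f α R = arcIntegral f R α β := by
  have hzero (x : ℝ) :
      HasDerivAt (fun y => rayIntegral f β y - rayIntegral f α y - arcIntegral f y α β) 0 x := by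
    simpa using ((hasDerivAt_rayIntegral hf.continuous β x).fun_sub
      (hasDerivAt_rayIntegral hf.continuous α x)).fun_sub (hasDerivAt_arcIntegral hf α β x)
  have hconst := is_const_of_deriv_eq_zero (fun x => (hzero x).differentiableAt)
    (fun x => (hzero x).deriv) R 0
  simpa [rayIntegral, arcIntegral, sub_eq_zero] using hconst

end Sector

section Fresnel

variable {c : ℝ}

lemma norm_arc_integrand_cexp_mul_I_mul_sq (R θ : ℝ) :
    ‖I * R * cexp (θ * I) * cexp (c * I * (R * cexp (θ * I)) ^ 2)‖ =
      |R| * Real.exp (-(c * R ^ 2 * Real.sin (2 * θ))) := by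
  have hre : (c * I * (R * cexp (θ * I)) ^ 2).re = -(c * R ^ 2 * Real.sin (2 * θ)) := by
    rw [mul_pow, ← Complex.exp_nat_mul,
      show c * I * (R ^ 2 * cexp ((2 : ℕ) * (θ * I))) =
        (c * R ^ 2 : ℝ) * (I * cexp ((2 * θ : ℝ) * I)) by push_cast; ring_nf,
      re_ofReal_mul, I_mul_re, exp_ofReal_mul_I_im]
    ring
  rw [norm_mul, norm_mul, norm_mul, norm_I, norm_real, norm_exp_ofReal_mul_I, Complex.norm_exp, hre,
    Real.norm_eq_abs, one_mul, mul_one]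

lemma integral_exp_mul_le_inv {k : ℝ} (hk : 0 < k) (a : ℝ) :
    ∫ θ in a..0, Real.exp (k * θ) ≤ k⁻¹ := by
  rw [intervalIntegral.integral_comp_mul_left (fun θ => Real.exp θ) hk.ne', integral_exp, mul_zero,
    Real.exp_zero, smul_eq_mul]
  have := Real.exp_pos (k * a)
  exact mul_le_of_le_one_right (inv_nonneg.2 hk.le) (by linarith)

lemma norm_arcIntegral_cexp_mul_I_mul_sq_le {R : ℝ} (hc : c < 0) (hR : 0 < R) :
    ‖arcIntegral (fun z => cexp (c * I * z ^ 2)) R (-(π / 4)) 0‖ ≤ π / (4 * -c * R) := by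
  set k := 4 * -c * R ^ 2 / π with hk
  have hc' : 0 < -c := neg_pos.2 hc
  have hk0 : 0 < k := by positivity
  have hbound : ∀ θ ∈ Ioc (-(π / 4)) 0,
      ‖I * R * cexp (θ * I) * cexp (c * I * (R * cexp (θ * I)) ^ 2)‖ ≤ R * Real.exp (k * θ) := by
    rintro θ ⟨hθl, hθr⟩
    have hsin : π * Real.sin (2 * θ) ≤ 4 * θ := by
      have := Real.mul_le_sin (x := -(2 * θ)) (by linarith) (by linarith)
      rw [Real.sin_neg, div_mul_eq_mul_div, div_le_iff₀ Real.pi_pos] at this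
      linarith
    rw [norm_arc_integrand_cexp_mul_I_mul_sq, abs_of_pos hR, hk]
    gcongr
    rw [div_mul_eq_mul_div, le_div_iff₀ Real.pi_pos]
    nlinarith [mul_le_mul_of_nonneg_left hsin (by positivity : 0 ≤ -c * R ^ 2)]
  calc _ ≤ ∫ θ in -(π / 4)..0, R * Real.exp (k * θ) :=
        intervalIntegral.norm_integral_le_of_norm_le (by linarith [Real.pi_pos])
          (ae_of_all _ hbound) (Continuous.intervalIntegrable (by fun_prop) _ _)
    _ ≤ R * k⁻¹ := by
        rw [intervalIntegral.integral_const_mul]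
        exact mul_le_mul_of_nonneg_left (integral_exp_mul_le_inv hk0 _) hR.le
    _ = π / (4 * -c * R) := by
        rw [hk]
        field_simp

lemma tendsto_arcIntegral_cexp_mul_I_mul_sq (hc : c < 0) :
    Tendsto (fun R => arcIntegral (fun z => cexp (c * I * z ^ 2)) R (-(π / 4)) 0) atTop (𝓝 0) := by
  have hdecay : Tendsto (fun R : ℝ => π / (4 * -c * R)) atTop (𝓝 0) :=
    tendsto_const_nhds.div_atTop (tendsto_id.const_mul_atTop (by linarith))
  refine squeeze_zero_norm' ?_ hdecay
  filter_upwards [eventually_gt_atTop 0] with R hR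
  exact norm_arcIntegral_cexp_mul_I_mul_sq_le hc hR

lemma tendsto_integral_cexp_mul_sq (hc : c < 0) :
    Tendsto (fun R : ℝ => ∫ r in (0:ℝ)..R, cexp (c * r ^ 2)) atTop (𝓝 (√(π / -c) / 2 : ℝ)) := by
  have hint : IntegrableOn (fun r : ℝ => cexp (c * r ^ 2)) (Ioi 0) := by
    simpa using (integrable_cexp_neg_mul_sq (b := -c) (by simpa using hc)).integrableOn
  have hval : ∫ r in Ioi (0:ℝ), cexp (c * r ^ 2) = (√(π / -c) / 2 : ℝ) := by
    rw [← integral_gaussian_Ioi, ← integral_complex_ofReal]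
    push_cast
    simp
  simpa [hval] using intervalIntegral_tendsto_integral_Ioi 0 hint tendsto_id

theorem tendsto_integral_cexp_mul_I_mul_sq_of_neg (hc : c < 0) :
    Tendsto (fun R : ℝ => ∫ u in (0:ℝ)..R, cexp (c * I * u ^ 2)) atTop
      (𝓝 (cexp (-(π / 4) * I) * (√(π / -c) / 2 : ℝ))) := by
  have hrot (r : ℝ) : cexp (c * I * (r * cexp ((-(π / 4) : ℝ) * I)) ^ 2) = cexp (c * r ^ 2) := by
    rw [mul_pow, ← Complex.exp_nat_mul]
    push_cast
    rw [show (2 : ℂ) * (-(π / 4) * I) = -π / 2 * I by ring, exp_neg_pi_div_two_mul_I]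
    congr 1
    linear_combination (-(c : ℂ) * r ^ 2) * I_sq
  have hsector (R : ℝ) : ∫ u in (0:ℝ)..R, cexp (c * I * u ^ 2) =
      cexp (-(π / 4) * I) * (∫ r in (0:ℝ)..R, cexp (c * r ^ 2)) +
        arcIntegral (fun z => cexp (c * I * z ^ 2)) R (-(π / 4)) 0 := by
    rw [← rayIntegral_sub_rayIntegral (by fun_prop) (-(π / 4)) 0 R]
    simp only [rayIntegral, hrot, ofReal_zero, zero_mul, Complex.exp_zero, one_mul, mul_one,
      intervalIntegral.integral_const_mul]
    push_cast
    ring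
  simpa [funext hsector] using ((tendsto_integral_cexp_mul_sq hc).const_mul _).add
    (tendsto_arcIntegral_cexp_mul_I_mul_sq hc)

theorem tendsto_integral_cexp_mul_I_mul_sq_of_pos (hc : 0 < c) :
    Tendsto (fun R : ℝ => ∫ u in (0:ℝ)..R, cexp (c * I * u ^ 2)) atTop
      (𝓝 (cexp (π / 4 * I) * (√(π / c) / 2 : ℝ))) := by
  simpa only [Function.comp_def, ← intervalIntegral.intervalIntegral_conj, ← Complex.exp_conj,
    map_mul, map_pow, map_neg, map_div₀, map_ofNat, conj_ofReal, conj_I, ofReal_neg, neg_mul_neg,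
    neg_neg] using (Complex.continuous_conj.tendsto _).comp
      (tendsto_integral_cexp_mul_I_mul_sq_of_neg (neg_lt_zero.2 hc))

end Fresnel

lemma integral_ofReal_mul_comp_sq {g : ℝ → ℂ} (hg : Continuous g) (R : ℝ) :
    ∫ r in (0:ℝ)..R, (r : ℂ) * g (r ^ 2) = (∫ u in (0:ℝ)..R ^ 2, g u) / 2 := by
  have h := intervalIntegral.integral_deriv_smul_comp (a := 0) (b := R) (g := g)
    (fun x _ => by simpa using hasDerivAt_pow 2 x) (by fun_prop) hg
  simp only [Function.comp_def, zero_pow two_ne_zero, Complex.real_smul] at h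
  rw [← h, ← intervalIntegral.integral_div]
  congr 1 with r
  push_cast
  ring

lemma cexp_pi_mul_I_div_four_sq : cexp (π * I / 4) ^ 2 = I := by
  rw [← Complex.exp_nat_mul, show ((2 : ℕ) : ℂ) * (π * I / 4) = π / 2 * I by push_cast; ring,
    exp_pi_div_two_mul_I]

lemma I_mul_cexp_neg_pi_div_four_mul_I : I * cexp (-(π / 4) * I) = cexp (π / 4 * I) := by
  rw [show (π / 4 * I : ℂ) = π / 2 * I + -(π / 4) * I by ring, Complex.exp_add,
    exp_pi_div_two_mul_I]

lemma I_mul_cexp_pi_div_four_mul_I : I * cexp (π / 4 * I) = -cexp (-(π / 4) * I) := by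
  rw [← I_mul_cexp_neg_pi_div_four_mul_I, ← mul_assoc, I_mul_I, neg_one_mul]

lemma c1_div_sqrt {t : ℝ} (ht : 0 < t) :
    c1 / (√t : ℂ) = cexp (-(π / 4) * I) * (√(π / (2 * t)) / 2 : ℝ) := by
  have h2 : (√2 : ℂ) ≠ 0 := by exact_mod_cast (Real.sqrt_pos.2 two_pos).ne'
  have ht' : (√t : ℂ) ≠ 0 := by exact_mod_cast (Real.sqrt_pos.2 ht).ne'
  rw [Real.sqrt_div Real.pi_pos.le, Real.sqrt_mul zero_le_two, c1]
  push_cast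
  field_simp

lemma gammaTrunc_mul_cexp_quartic (t R : ℝ) :
    gammaTrunc (fun k => k * cexp (-2 * I * k ^ 4 * t)) R =
      (∫ u in (0:ℝ)..R ^ 2, cexp ((-(2 * t) : ℝ) * I * u ^ 2)) / 2 -
        I * (∫ u in (0:ℝ)..R ^ 2, cexp ((2 * t : ℝ) * I * u ^ 2)) / 2 := by
  have hg : Continuous fun u : ℝ =>
      cexp ((-(2 * t) : ℝ) * I * u ^ 2) - I * cexp ((2 * t : ℝ) * I * u ^ 2) := by fun_prop
  have hpull : gammaTrunc (fun k => k * cexp (-2 * I * k ^ 4 * t)) R = ∫ r in (0:ℝ)..R,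
      (r : ℂ) * (cexp ((-(2 * t) : ℝ) * I * (r ^ 2 : ℝ) ^ 2) -
        I * cexp ((2 * t : ℝ) * I * (r ^ 2 : ℝ) ^ 2)) := by
    unfold gammaTrunc
    congr 1 with r
    have h4 : cexp (π * I / 4) ^ 4 = -1 := by
      rw [show 4 = 2 * 2 by rfl, pow_mul, cexp_pi_mul_I_div_four_sq, I_sq]
    simp only [mul_pow, h4]
    push_cast
    linear_combination (norm := ring_nf)
      (-(r : ℂ) * cexp (2 * I * (r : ℂ) ^ 4 * t)) * cexp_pi_mul_I_div_four_sq
  rw [hpull, integral_ofReal_mul_comp_sq hg, intervalIntegral.integral_sub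
    (Continuous.intervalIntegrable (by fun_prop) _ _)
    (Continuous.intervalIntegrable (by fun_prop) _ _), intervalIntegral.integral_const_mul]
  ring

end

/-- For `t > 0`, `∫_γ k e^{-2ik⁴t} dk = c₁/√t`; for `t < 0` it equals `0`. -/
theorem gamma_ke_integral (t : ℝ) :
    (0 < t →
      Tendsto (fun R => gammaTrunc (fun k => k * Complex.exp (-2 * Complex.I * k ^ 4 * (t : ℂ))) R)
        atTop (nhds (c1 / (Real.sqrt t : ℂ)))) ∧
    (t < 0 →
      Tendsto (fun R => gammaTrunc (fun k => k * Complex.exp (-2 * Complex.I * k ^ 4 * (t : ℂ))) R)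
        atTop (nhds 0)) := by
  have hsq : Tendsto (fun R : ℝ => R ^ 2) atTop atTop := tendsto_pow_atTop two_ne_zero
  simp only [gammaTrunc_mul_cexp_quartic]
  constructor
  · intro ht
    have hneg := (tendsto_integral_cexp_mul_I_mul_sq_of_neg (c := -(2 * t)) (by linarith)).comp hsq
    have hpos := (tendsto_integral_cexp_mul_I_mul_sq_of_pos (c := 2 * t) (by linarith)).comp hsq
    convert (hneg.div_const 2).sub ((hpos.const_mul I).div_const 2) using 2
    · rfl
    rw [neg_neg, ← mul_assoc, I_mul_cexp_pi_div_four_mul_I, c1_div_sqrt ht]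
    ring
  · intro ht
    have hneg := (tendsto_integral_cexp_mul_I_mul_sq_of_neg (c := 2 * t) (by linarith)).comp hsq
    have hpos := (tendsto_integral_cexp_mul_I_mul_sq_of_pos (c := -(2 * t)) (by linarith)).comp hsq
    convert (hpos.div_const 2).sub ((hneg.const_mul I).div_const 2) using 2
    · rfl
    rw [← mul_assoc, I_mul_cexp_neg_pi_div_four_mul_I, sub_self]
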